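/- Let θ ∈ ℝ be irrational and consider the suspension flow φ on (ℂ × ℝ) × AddCircle (1:ℝ) given by φ_t((w, h), s) = ((e^{2πiθt} w, h), s + t) (which preserves the subset S² × S¹ where S² = {(w,h) ∈ ℂ × ℝ : |w|² + h² = 1}). Then for every point ((w, h), s) with w ≠ 0, the ω-limit set ω((w, h), s) equals the torus {((w', h'), s') : |w'| = |w| and h' = h}. -/

import Mathlib

/-!
The flow preserves `‖w‖` and `h`, so `ω(p)` lies in the closed torus through `p`. Conversely,
sampling the orbit at the times `τ + n`, `n ∈ ℤ`, where `τ ≡ s' - s`, freezes the circle coordinate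
at `s'` and turns the angle of `w` by the irrational rotation `x ↦ x + θ` of `ℝ/ℤ`. An ω-limit
set of that rotation is nonempty, closed and invariant, hence contains a dense orbit and is the
whole circle; its image under `x ↦ ((e^{2πix} w, h), s')` is the whole fibre of the torus over `s'`.
-/

/-- The suspension flow on `(ℂ × ℝ) × (ℝ/ℤ)` of the rotation of `S² ⊆ ℂ × ℝ` by angle
`2πθ`: `φ_t((w, h), s) = ((e^{2πiθt} w, h), s + t)`. -/
noncomputable def suspensionFlow (θ : ℝ) (t : ℝ) (p : (ℂ × ℝ) × AddCircle (1 : ℝ)) :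
    (ℂ × ℝ) × AddCircle (1 : ℝ) :=
  ((Complex.exp ((2 * Real.pi * θ * t : ℝ) * Complex.I) * p.1.1, p.1.2),
    p.2 + (t : AddCircle (1 : ℝ)))

open Filter Set

theorem omegaLimit_comp_subset_of_tendsto {τ τ' α β : Type*} [TopologicalSpace β] {ϕ : τ → α → β}
    {s : Set α} {m : τ' → τ} {f' : Filter τ'} {f : Filter τ} (hm : Tendsto m f' f) :
    omegaLimit f' (fun t ↦ ϕ (m t)) s ⊆ omegaLimit f ϕ s := fun y hy ↦
  (mem_omegaLimit_iff_frequently _ _ _ y).2 fun n hn ↦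
    hm.frequently ((mem_omegaLimit_iff_frequently _ _ _ y).1 hy n hn)

theorem omegaLimit_subset_of_mapsTo {τ α β : Type*} [TopologicalSpace β] {f : Filter τ}
    {ϕ : τ → α → β} {s : Set α} {c : Set β} (hc : IsClosed c) (hϕ : ∀ t, MapsTo (ϕ t) s c) :
    omegaLimit f ϕ s ⊆ c :=
  (omegaLimit_subset_closure_image2 f ϕ s univ_mem).trans <|
    closure_minimal (image2_subset_iff.2 fun t _ _ hx ↦ hϕ t hx) hc

theorem Flow.omegaLimit_eq_univ_of_denseRange {τ α : Type*} [TopologicalSpace τ] [AddMonoid τ]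
    [TopologicalSpace α] [CompactSpace α] (ϕ : Flow τ α) {f : Filter τ} [f.NeBot]
    (hf : ∀ t, Tendsto (t + ·) f f) (hϕ : ∀ x, DenseRange (ϕ · x)) (x : α) :
    omegaLimit f ϕ {x} = univ := by
  obtain ⟨y, hy⟩ := nonempty_omegaLimit f ϕ {x} (singleton_nonempty x)
  have hsub : range (ϕ · y) ⊆ omegaLimit f ϕ {x} := by
    rintro _ ⟨t, rfl⟩
    exact ϕ.isInvariant_omegaLimit f {x} hf t hy
  exact eq_univ_of_univ_subset <|
    (hϕ y).closure_eq ▸ closure_minimal hsub (isClosed_omegaLimit _ _ _)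

namespace AddCircle

variable {p : ℝ}

def rotationFlow (a : AddCircle p) : Flow ℤ (AddCircle p) where
  toFun n x := x + n • a
  cont' := continuous_prod_of_discrete_left.2 fun n ↦ continuous_add_const (n • a)
  map_add' _ _ _ := by simp only [add_zsmul]; abel
  map_zero' _ := by simp only [zero_zsmul, add_zero]

@[simp]
theorem rotationFlow_apply (a x : AddCircle p) (n : ℤ) : rotationFlow a n x = x + n • a := rfl

theorem omegaLimit_rotationFlow_eq_univ [Fact (0 < p)] {a : ℝ} (ha : Irrational (a / p))
    (x : AddCircle p) : omegaLimit atTop (rotationFlow (a : AddCircle p)) {x} = univ :=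
  (rotationFlow _).omegaLimit_eq_univ_of_denseRange
    (fun n ↦ tendsto_atTop_add_const_left _ n tendsto_id)
    (fun y ↦ (add_left_surjective y).denseRange.comp (denseRange_zsmul_coe_iff.2 ha)
      (continuous_const_add y)) x

theorem exists_toCircle_mul_eq (hp : p ≠ 0) {w z : ℂ} (hw : w ≠ 0) (hz : ‖z‖ = ‖w‖) :
    ∃ y : AddCircle p, (toCircle y : ℂ) * w = z := by
  have hzw : z / w ∈ Submonoid.unitSphere ℂ := by
    simp [Submonoid.unitSphere, hz, hw]
  obtain ⟨y, hy⟩ := (homeomorphCircle hp).surjective ⟨z / w, hzw⟩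
  refine ⟨y, ?_⟩
  rw [← homeomorphCircle_apply hp, hy]
  exact div_mul_cancel₀ z hw

end AddCircle

theorem omegaLimit_suspensionFlow_subset (θ : ℝ) (f : Filter ℝ) (w : ℂ) (h : ℝ)
    (s : AddCircle (1 : ℝ)) :
    omegaLimit f (suspensionFlow θ) {((w, h), s)} ⊆
      {q : (ℂ × ℝ) × AddCircle (1 : ℝ) | ‖q.1.1‖ = ‖w‖ ∧ q.1.2 = h} := by
  refine omegaLimit_subset_of_mapsTo ?_ fun t ↦ mapsTo_singleton.2 ⟨?_, rfl⟩
  · exact (isClosed_eq (by fun_prop) continuous_const).inter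
      (isClosed_eq (by fun_prop) continuous_const)
  · simp only [suspensionFlow, norm_mul, Complex.norm_exp_ofReal_mul_I, one_mul]

theorem suspensionFlow_add_intCast (θ τ : ℝ) (n : ℤ) (w : ℂ) (h : ℝ) (s : AddCircle (1 : ℝ)) :
    suspensionFlow θ (τ + n) ((w, h), s) =
      ((AddCircle.toCircle (AddCircle.rotationFlow (θ : AddCircle (1 : ℝ)) n (θ * τ : ℝ)) * w, h),
        s + τ) := by
  have hn : ((n : ℝ) : AddCircle (1 : ℝ)) = 0 := (AddCircle.coe_eq_zero_iff 1).2 ⟨n, by simp⟩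
  have hrot : AddCircle.rotationFlow (θ : AddCircle (1 : ℝ)) n (θ * τ : ℝ) =
      (θ * (τ + n) : ℝ) := by
    rw [AddCircle.rotationFlow_apply, ← AddCircle.coe_zsmul, ← AddCircle.coe_add, zsmul_eq_mul]
    ring_nf
  rw [hrot, AddCircle.toCircle_apply_mk, Circle.coe_exp, suspensionFlow, AddCircle.coe_add, hn,
    add_zero]
  push_cast
  ring_nf

theorem toCircle_mul_mem_omegaLimit_suspensionFlow {θ : ℝ} (hθ : Irrational θ) (τ : ℝ) (w : ℂ)
    (h : ℝ) (s x : AddCircle (1 : ℝ)) :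
    ((AddCircle.toCircle x * w, h), s + τ) ∈ omegaLimit atTop (suspensionFlow θ) {((w, h), s)} := by
  let G (y : AddCircle (1 : ℝ)) : (ℂ × ℝ) × AddCircle (1 : ℝ) :=
    ((AddCircle.toCircle y * w, h), s + τ)
  have hG : MapsTo G (omegaLimit atTop (AddCircle.rotationFlow (θ : AddCircle (1 : ℝ)))
      {((θ * τ : ℝ) : AddCircle (1 : ℝ))})
      (omegaLimit atTop (fun n : ℤ ↦ suspensionFlow θ (τ + n)) {((w, h), s)}) := by
    refine mapsTo_omegaLimit' (ϕ' := fun n : ℤ ↦ suspensionFlow θ (τ + n))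
      (ga := fun _ ↦ ((w, h), s)) (gb := G) _ (mapsTo_singleton.2 (mem_singleton _))
      (Eventually.of_forall ?_) (by fun_prop)
    rintro n _ rfl
    exact (suspensionFlow_add_intCast θ τ n w h s).symm
  have hx : x ∈ omegaLimit atTop (AddCircle.rotationFlow (θ : AddCircle (1 : ℝ)))
      {((θ * τ : ℝ) : AddCircle (1 : ℝ))} := by
    rw [AddCircle.omegaLimit_rotationFlow_eq_univ (by rwa [div_one])]
    trivial
  exact omegaLimit_comp_subset_of_tendsto (ϕ := suspensionFlow θ) (m := fun n : ℤ ↦ τ + n)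
    (tendsto_atTop_add_const_left _ τ tendsto_intCast_atTop_atTop) (hG hx)

/-- for irrational `θ`, the ω-limit set of any point `((w, h), s)` with
`w ≠ 0` under the suspension flow `φ_t((w, h), s) = ((e^{2πiθt} w, h), s + t)` is the
torus `{((w', h'), s') : |w'| = |w|, h' = h}`. -/
theorem suspensionFlow_omegaLimit_torus (θ : ℝ) (hθ : Irrational θ)
    (w : ℂ) (h : ℝ) (s : AddCircle (1 : ℝ)) (hw : w ≠ 0) :
    omegaLimit Filter.atTop (suspensionFlow θ) {((w, h), s)} =
      {q : (ℂ × ℝ) × AddCircle (1 : ℝ) |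
        ‖q.1.1‖ = ‖w‖ ∧ q.1.2 = h} := by
  refine (omegaLimit_suspensionFlow_subset θ atTop w h s).antisymm ?_
  rintro ⟨⟨z, h'⟩, s'⟩ ⟨hz, rfl⟩
  obtain ⟨τ, hτ⟩ := QuotientAddGroup.mk_surjective (s' - s)
  obtain ⟨x, rfl⟩ := AddCircle.exists_toCircle_mul_eq one_ne_zero hw hz
  have hs' : s' = s + τ := by rw [hτ, add_sub_cancel]
  exact hs' ▸ toCircle_mul_mem_omegaLimit_suspensionFlow hθ τ w h' s x
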